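/- arXiv:2511.01694 — 2 statements merged into one kernel-verified Lean document; each statement's English description precedes it below -/
import Mathlib

section
/- Let Σ₁ be an n×n real matrix, H an m×n real matrix, and R an invertible m×m real matrix such that S = H Σ₁ Hᵀ + R is invertible. Define K = Σ₁ Hᵀ S⁻¹ and Σ = Σ₁ − K H Σ₁. Then for any vectors μ₁ ∈ ℝⁿ and y, ŷ ∈ ℝᵐ, the Kalman mean update satisfies μ₁ + K (y − ŷ) = μ₁ − Σ (Hᵀ R⁻¹ (ŷ − y)). In particular, the Kalman update of the mean moves in the direction of the gradient g = Hᵀ R⁻¹ (ŷ − y) preconditioned by the posterior covariance Σ. -/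
open Matrix

/-- With `R` invertible and the innovation matrix `S = H * S₁ * Hᵀ + R`
invertible, the Kalman mean update `μ₁ + K (y − yhat)` equals
`μ₁ − P (Hᵀ R⁻¹ (yhat − y))`, i.e. a step along the gradient `g = Hᵀ R⁻¹ (yhat − y)`
preconditioned by the posterior covariance `P`. -/
theorem kalman_mean_update_eq_posterior_precond_gradient_step {n m : ℕ}
    (S₁ : Matrix (Fin n) (Fin n) ℝ) (H : Matrix (Fin m) (Fin n) ℝ)
    (R : Matrix (Fin m) (Fin m) ℝ)
    (hR : IsUnit R) (hS : IsUnit (H * S₁ * Hᵀ + R))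
    (μ₁ : Fin n → ℝ) (y yhat : Fin m → ℝ) :
    let S := H * S₁ * Hᵀ + R
    let K := S₁ * Hᵀ * S⁻¹
    let P := S₁ - K * H * S₁
    μ₁ + K *ᵥ (y - yhat) = μ₁ - P *ᵥ (Hᵀ *ᵥ (R⁻¹ *ᵥ (yhat - y))) := by
  intro S K P
  have hRinv : R * R⁻¹ = 1 := mul_nonsing_inv R ((isUnit_iff_isUnit_det R).mp hR)
  have hSinv : S⁻¹ * S = 1 := nonsing_inv_mul S ((isUnit_iff_isUnit_det S).mp hS)
  have h0 : S₁ * Hᵀ * R⁻¹ = S₁ * Hᵀ * S⁻¹ * (H * S₁ * Hᵀ) * R⁻¹ + S₁ * Hᵀ * S⁻¹ := by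
    calc S₁ * Hᵀ * R⁻¹ = S₁ * Hᵀ * (S⁻¹ * S) * R⁻¹ := by rw [hSinv, Matrix.mul_one]
    _ = S₁ * Hᵀ * S⁻¹ * (H * S₁ * Hᵀ) * R⁻¹ + S₁ * Hᵀ * S⁻¹ * (R * R⁻¹) := by
        simp only [S, Matrix.mul_add, Matrix.add_mul, Matrix.mul_assoc]
    _ = _ := by rw [hRinv, Matrix.mul_one]
  have key : P * Hᵀ * R⁻¹ = K := by
    simp only [P, K, Matrix.sub_mul]
    rw [h0]
    simp only [Matrix.mul_assoc]
    abel
  have h2 : P *ᵥ (Hᵀ *ᵥ (R⁻¹ *ᵥ (yhat - y))) = K *ᵥ (yhat - y) := by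
    rw [← key]
    simp [← Matrix.mulVec_mulVec]
  rw [h2]
  have h3 : (yhat - y) = -(y - yhat) := by abel
  rw [h3, Matrix.mulVec_neg, sub_neg_eq_add]
end

section
/- Let Σ₁ be a positive definite n×n real matrix (prior covariance), R a positive definite m×m real matrix (observation noise covariance), and H an m×n real matrix (Jacobian). Define the Kalman gain K = Σ₁ Hᵀ (H Σ₁ Hᵀ + R)⁻¹, and let μ₁ ∈ ℝⁿ, y, ŷ ∈ ℝᵐ. Set the gradient g = Hᵀ R⁻¹ (ŷ − y) and the Fisher matrix F = Hᵀ R⁻¹ H. Then the Kalman mean update equals a damped natural-gradient step: μ₁ + K (y − ŷ) = μ₁ − (Σ₁⁻¹ + F)⁻¹ g, where Σ₁⁻¹ + F is invertible. -/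
open Matrix

/-- For positive definite prior covariance `S₁` and noise covariance `R`,
Jacobian `H`, Kalman gain `K = S₁ Hᵀ (H S₁ Hᵀ + R)⁻¹`, gradient `g = Hᵀ R⁻¹ (yhat − y)`
and Fisher matrix `F = Hᵀ R⁻¹ H`, the matrix `S₁⁻¹ + F` is invertible and the Kalman mean
update is a damped natural-gradient step: `μ₁ + K (y − yhat) = μ₁ − (S₁⁻¹ + F)⁻¹ g`. -/
theorem kalman_mean_update_eq_damped_natural_gradient_step {n m : ℕ}
    (S₁ : Matrix (Fin n) (Fin n) ℝ) (R : Matrix (Fin m) (Fin m) ℝ)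
    (H : Matrix (Fin m) (Fin n) ℝ)
    (hS₁ : S₁.PosDef) (hR : R.PosDef)
    (μ₁ : Fin n → ℝ) (y yhat : Fin m → ℝ) :
    let K := S₁ * Hᵀ * (H * S₁ * Hᵀ + R)⁻¹
    let g : Fin n → ℝ := Hᵀ *ᵥ (R⁻¹ *ᵥ (yhat - y))
    let F := Hᵀ * R⁻¹ * H
    IsUnit (S₁⁻¹ + F) ∧
      μ₁ + K *ᵥ (y - yhat) = μ₁ - (S₁⁻¹ + F)⁻¹ *ᵥ g := by
  intro K g F
  have hRi : (R⁻¹).PosDef := hR.inv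
  have hF : F.PosSemidef := by
    have := hRi.posSemidef.conjTranspose_mul_mul_same H
    simpa [F] using this
  have hD : (S₁⁻¹ + F).PosDef := hS₁.inv.add_posSemidef hF
  have hG : (H * S₁ * Hᵀ + R).PosDef := by
    have := hS₁.posSemidef.mul_mul_conjTranspose_same H
    exact Matrix.PosDef.posSemidef_add (by simpa using this) hR
  have hGdet : IsUnit (H * S₁ * Hᵀ + R).det := (isUnit_iff_isUnit_det _).mp hG.isUnit
  have hDdet : IsUnit (S₁⁻¹ + F).det := (isUnit_iff_isUnit_det _).mp hD.isUnit
  have hSdet : IsUnit S₁.det := (isUnit_iff_isUnit_det _).mp hS₁.isUnit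
  have hRdet : IsUnit R.det := (isUnit_iff_isUnit_det _).mp hR.isUnit
  have h1 : (S₁⁻¹ + F) * (S₁ * Hᵀ) = Hᵀ * R⁻¹ * (H * S₁ * Hᵀ + R) := by
    have e1 : S₁⁻¹ * (S₁ * Hᵀ) = Hᵀ := Matrix.nonsing_inv_mul_cancel_left _ _ hSdet
    have e2 : Hᵀ * R⁻¹ * R = Hᵀ := by
      rw [Matrix.mul_assoc, Matrix.nonsing_inv_mul _ hRdet, Matrix.mul_one]
    rw [Matrix.add_mul, e1, Matrix.mul_add, e2, add_comm]
    congr 1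
    simp [F, Matrix.mul_assoc]
  have hK : (S₁⁻¹ + F) * K = Hᵀ * R⁻¹ := by
    have : (S₁⁻¹ + F) * K = (S₁⁻¹ + F) * (S₁ * Hᵀ) * (H * S₁ * Hᵀ + R)⁻¹ := by
      simp [K, Matrix.mul_assoc]
    rw [this, h1, Matrix.mul_assoc, Matrix.mul_nonsing_inv _ hGdet, Matrix.mul_one]
  have hK2 : K = (S₁⁻¹ + F)⁻¹ * (Hᵀ * R⁻¹) := by
    rw [← hK, Matrix.nonsing_inv_mul_cancel_left _ _ hDdet]
  refine ⟨hD.isUnit, ?_⟩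
  rw [hK2]
  simp only [g, sub_eq_add_neg, Matrix.mulVec_mulVec, Matrix.mulVec_add, Matrix.mulVec_neg,
    Matrix.mul_assoc]
  abel
end
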